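/- arXiv:1903.03881 — 3 statements merged into one kernel-verified Lean document; each statement's English description precedes it below -/
import Mathlib

section
/- Assume the standing setup, and let E be the number of U-rich directions. Then Σ_{m U-rich} c_m ≥ (p - n)·N/2 - (1 - 1/(n + 1))·r·(p - r) + (n - 1)·N·E/2, where the sum runs over all U-rich directions m (inequality in ℚ). -/
open Finset Polynomial

attribute [local instance] Classical.propDecidable

/-- The line in `(ZMod p)²` with slope `m` (where `none` denotes the vertical
slope `∞`) and "intercept" `c`. -/
noncomputable def lineWithSlope (p : ℕ) [NeZero p] (m : Option (ZMod p)) (c : ZMod p) :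
    Finset (ZMod p × ZMod p) :=
  match m with
  | some m => Finset.univ.filter fun q => q.2 = m * q.1 + c
  | none => Finset.univ.filter fun q => q.1 = c

/-- `ℓ` is `U`-rich: it meets `U` in at least `#U/p + 1` points. -/
def IsRich (p : ℕ) (U ℓ : Finset (ZMod p × ZMod p)) : Prop :=
  (U.card : ℚ) / p + 1 ≤ ((ℓ ∩ U).card : ℚ)

/-- `ℓ` is `U`-poor: it meets `U` in at most `#U/p - 1` points. -/
def IsPoor (p : ℕ) (U ℓ : Finset (ZMod p × ZMod p)) : Prop :=
  ((ℓ ∩ U).card : ℚ) ≤ (U.card : ℚ) / p - 1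

/-- `m` is a `U`-rich direction: some line with slope `m` is `U`-rich. -/
def IsRichDir (p : ℕ) [NeZero p] (U : Finset (ZMod p × ZMod p))
    (m : Option (ZMod p)) : Prop :=
  ∃ c : ZMod p, IsRich p U (lineWithSlope p m c)

/-- `m` is a `U`-special direction: some line with slope `m` is `U`-rich or `U`-poor. -/
def IsSpecialDir (p : ℕ) [NeZero p] (U : Finset (ZMod p × ZMod p))
    (m : Option (ZMod p)) : Prop :=
  ∃ c : ZMod p, IsRich p U (lineWithSlope p m c) ∨ IsPoor p U (lineWithSlope p m c)

/-- `c_m`: the number of unordered pairs of distinct points of `U` lying on a common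
line with slope `m`. -/
noncomputable def pairsCount (p : ℕ) [NeZero p] (U : Finset (ZMod p × ZMod p))
    (m : Option (ZMod p)) : ℕ :=
  ((U.powersetCard 2).filter fun s => ∃ c : ZMod p, s ⊆ lineWithSlope p m c).card

/-- The set of `U`-rich lines, identified with pairs (slope, intercept). -/
noncomputable def richLines (p : ℕ) [NeZero p] (U : Finset (ZMod p × ZMod p)) :
    Finset (Option (ZMod p) × ZMod p) :=
  Finset.univ.filter fun q => IsRich p U (lineWithSlope p q.1 q.2)

/-- The set of `U`-rich directions, as a finset. -/
noncomputable def richDirs (p : ℕ) [NeZero p] (U : Finset (ZMod p × ZMod p)) :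
    Finset (Option (ZMod p)) :=
  Finset.univ.filter fun m => IsRichDir p U m

/-- `w_m`: the number of `U`-rich lines with slope `m`. -/
noncomputable def wSlope (p : ℕ) [NeZero p] (U : Finset (ZMod p × ZMod p))
    (m : Option (ZMod p)) : ℕ :=
  (Finset.univ.filter fun c : ZMod p => IsRich p U (lineWithSlope p m c)).card

/-! Every pair of distinct points of `U` spans exactly one direction, so `∑ₘ cₘ = N(N-1)/2`.
If `m` is not a rich direction, every line of slope `m` meets `U` in at most `n` points, so
`cₘ ≤ (n-1)N/2`; if `m` is not even special, every such line meets `U` in `n - 1` or `n`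
points, and convexity of `k(k-1)/2` gives `cₘ ≤ (n-1)(N-r)/2`. Subtracting these bounds from
`N(N-1)/2` leaves a lower bound for the rich directions that decreases with the number of
special directions, and the hypothesis on that number gives the claim. -/

theorem Finset.sum_card_filter_eq_card_of_existsUnique {ι α : Type*} [Fintype ι]
    (s : Finset α) (P : ι → α → Prop) [∀ i, DecidablePred (P i)]
    (h : ∀ a ∈ s, ∃! i, P i a) : ∑ i, #(s.filter (P i)) = #s := by
  simp_rw [card_filter]
  rw [sum_comm, card_eq_sum_ones]
  refine sum_congr rfl fun a ha => ?_
  obtain ⟨i, hi, huniq⟩ := h a ha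
  rw [sum_eq_single i (fun j _ hj => if_neg fun hPj => hj (huniq j hPj)) (by simp), if_pos hi]

section Lines

variable {p : ℕ}

def interceptOf [NeZero p] (m : Option (ZMod p)) (q : ZMod p × ZMod p) : ZMod p :=
  match m with
  | some m => q.2 - m * q.1
  | none => q.1

theorem mem_lineWithSlope [NeZero p] {m : Option (ZMod p)} {c : ZMod p} {q : ZMod p × ZMod p} :
    q ∈ lineWithSlope p m c ↔ interceptOf m q = c := by
  cases m with
  | none => simp [lineWithSlope, interceptOf]
  | some m => simp [lineWithSlope, interceptOf, sub_eq_iff_eq_add']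

theorem sum_card_lineWithSlope_inter [NeZero p] (U : Finset (ZMod p × ZMod p))
    (m : Option (ZMod p)) : ∑ c, #(lineWithSlope p m c ∩ U) = #U := by
  rw [card_eq_sum_card_fiberwise (f := interceptOf m) (t := univ) fun _ _ => mem_univ _]
  refine sum_congr rfl fun c _ => congrArg card ?_
  ext q
  simp [mem_lineWithSlope, and_comm]

variable [Fact p.Prime]

theorem existsUnique_interceptOf_eq {a b : ZMod p × ZMod p} (hab : a ≠ b) :
    ∃! m : Option (ZMod p), interceptOf m a = interceptOf m b := by
  by_cases h₁ : a.1 = b.1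
  · refine ⟨none, h₁, fun m hm => ?_⟩
    cases m with
    | none => rfl
    | some m =>
      simp only [interceptOf, h₁, sub_left_inj] at hm
      exact absurd (Prod.ext h₁ hm) hab
  · have hd : b.1 - a.1 ≠ 0 := sub_ne_zero.mpr (Ne.symm h₁)
    refine ⟨some ((b.2 - a.2) / (b.1 - a.1)), ?_, fun m hm => ?_⟩
    · simp only [interceptOf]
      field_simp
      ring
    cases m with
    | none => exact absurd hm h₁
    | some m =>
      simp only [interceptOf] at hm
      rw [Option.some_inj, eq_div_iff hd]
      linear_combination hm

end Lines

section PairsCount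

variable {p : ℕ}

theorem pairsCount_eq_sum_choose_two [NeZero p] (U : Finset (ZMod p × ZMod p))
    (m : Option (ZMod p)) : pairsCount p U m = ∑ c, (#(lineWithSlope p m c ∩ U)).choose 2 := by
  rw [pairsCount, ← sum_card_filter_eq_card_of_existsUnique _ (fun c s => s ⊆ lineWithSlope p m c)]
  · refine sum_congr rfl fun c _ => ?_
    rw [← card_powersetCard]
    congr 1
    ext s
    simp only [mem_filter, mem_powersetCard, subset_inter_iff]
    exact ⟨fun h => ⟨⟨h.2, h.1.1.1⟩, h.1.1.2⟩, fun h => ⟨⟨⟨h.1.2, h.2⟩, c, h.1.1⟩, h.1.1⟩⟩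
  · simp only [mem_filter, mem_powersetCard]
    rintro s ⟨⟨-, hs⟩, c, hc⟩
    obtain ⟨a, ha⟩ := card_pos.mp (hs ▸ two_pos)
    refine ⟨c, hc, fun c' hc' => ?_⟩
    exact (mem_lineWithSlope.mp (hc' ha)).symm.trans (mem_lineWithSlope.mp (hc ha))

theorem exists_pair_subset_lineWithSlope_iff [NeZero p] {m : Option (ZMod p)}
    {a b : ZMod p × ZMod p} :
    (∃ c, {a, b} ⊆ lineWithSlope p m c) ↔ interceptOf m a = interceptOf m b := by
  simp only [insert_subset_iff, singleton_subset_iff, mem_lineWithSlope]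
  exact ⟨fun ⟨_, ha, hb⟩ => ha.trans hb.symm, fun h => ⟨_, h, rfl⟩⟩

theorem sum_pairsCount [Fact p.Prime] (U : Finset (ZMod p × ZMod p)) :
    ∑ m, pairsCount p U m = (#U).choose 2 := by
  rw [← card_powersetCard]
  refine sum_card_filter_eq_card_of_existsUnique _ _ fun s hs => ?_
  obtain ⟨a, b, hab, rfl⟩ := card_eq_two.mp (mem_powersetCard.mp hs).2
  simp only [exists_pair_subset_lineWithSlope_iff]
  exact existsUnique_interceptOf_eq hab

end PairsCount

theorem Nat.cast_choose_two_le_of_le {k n : ℕ} (h : k ≤ n) :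
    ((k.choose 2 : ℕ) : ℚ) ≤ (n - 1) * k / 2 := by
  rw [Nat.cast_choose_two]
  have : (k : ℚ) ≤ n := by exact_mod_cast h
  have : (0 : ℚ) ≤ k := k.cast_nonneg
  nlinarith

/-- Tangent-line bound: `k(k-1)/2` is convex and agrees with the right side at `k = n - 1, n`. -/
theorem Nat.cast_choose_two_le_of_le_of_le {k n : ℕ} (h₁ : n ≤ k + 1) (h₂ : k ≤ n) :
    ((k.choose 2 : ℕ) : ℚ) ≤ (n - 1) * (k - n / 2) := by
  rw [Nat.cast_choose_two]
  have : (n : ℚ) ≤ k + 1 := by exact_mod_cast h₁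
  have : (k : ℚ) ≤ n := by exact_mod_cast h₂
  nlinarith

section Directions

variable {p : ℕ} {n : ℕ} {U ℓ : Finset (ZMod p × ZMod p)}

theorem card_inter_le_of_not_isRich (hθ : (#U : ℚ) / p ≤ n) (h : ¬IsRich p U ℓ) :
    #(ℓ ∩ U) ≤ n := by
  rw [IsRich, not_le] at h
  have : (#(ℓ ∩ U) : ℚ) < n + 1 := by linarith
  exact Nat.lt_succ_iff.mp (by exact_mod_cast this)

theorem le_card_inter_add_one_of_not_isPoor (hθ : (n : ℚ) - 1 < #U / p) (h : ¬IsPoor p U ℓ) :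
    n ≤ #(ℓ ∩ U) + 1 := by
  rw [IsPoor, not_le] at h
  have : (n : ℚ) < #(ℓ ∩ U) + 1 + 1 := by linarith
  exact Nat.lt_succ_iff.mp (by exact_mod_cast this)

variable [NeZero p] {m : Option (ZMod p)}

theorem pairsCount_le_of_not_isRichDir (hθ : (#U : ℚ) / p ≤ n) (hm : ¬IsRichDir p U m) :
    (pairsCount p U m : ℚ) ≤ (n - 1) * #U / 2 := by
  have hk c : #(lineWithSlope p m c ∩ U) ≤ n :=
    card_inter_le_of_not_isRich hθ fun h => hm ⟨c, h⟩
  calc (pairsCount p U m : ℚ)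
      ≤ ∑ c, (n - 1) * (#(lineWithSlope p m c ∩ U) : ℚ) / 2 := by
        rw [pairsCount_eq_sum_choose_two, Nat.cast_sum]
        exact sum_le_sum fun c _ => Nat.cast_choose_two_le_of_le (hk c)
    _ = (n - 1) * #U / 2 := by
        rw [← sum_div, ← mul_sum, ← Nat.cast_sum, sum_card_lineWithSlope_inter]

theorem pairsCount_le_of_not_isSpecialDir (hθ₁ : (n : ℚ) - 1 < #U / p)
    (hθ₂ : (#U : ℚ) / p ≤ n) (hm : ¬IsSpecialDir p U m) :
    (pairsCount p U m : ℚ) ≤ (n - 1) * (#U - p * n / 2) := by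
  have hk c : n ≤ #(lineWithSlope p m c ∩ U) + 1 ∧ #(lineWithSlope p m c ∩ U) ≤ n :=
    ⟨le_card_inter_add_one_of_not_isPoor hθ₁ fun h => hm ⟨c, .inr h⟩,
      card_inter_le_of_not_isRich hθ₂ fun h => hm ⟨c, .inl h⟩⟩
  calc (pairsCount p U m : ℚ)
      ≤ ∑ c, (n - 1) * ((#(lineWithSlope p m c ∩ U) : ℚ) - n / 2) := by
        rw [pairsCount_eq_sum_choose_two, Nat.cast_sum]
        exact sum_le_sum fun c _ => Nat.cast_choose_two_le_of_le_of_le (hk c).1 (hk c).2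
    _ = (n - 1) * (#U - p * n / 2) := by
        rw [← mul_sum, sum_sub_distrib, ← Nat.cast_sum, sum_card_lineWithSlope_inter, sum_const,
          card_univ, ZMod.card, nsmul_eq_mul, mul_div_assoc]

noncomputable def specialDirs (p : ℕ) [NeZero p] (U : Finset (ZMod p × ZMod p)) :
    Finset (Option (ZMod p)) :=
  univ.filter fun m => IsSpecialDir p U m

theorem ncard_setOf_isSpecialDir :
    {m | IsSpecialDir p U m}.ncard = #(specialDirs p U) := by
  rw [Set.ncard_eq_toFinset_card', Set.toFinset_ofPred, specialDirs]

theorem richDirs_subset_specialDirs : richDirs p U ⊆ specialDirs p U := by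
  intro m hm
  obtain ⟨c, hc⟩ := (mem_filter.mp hm).2
  exact mem_filter.mpr ⟨mem_univ m, c, .inl hc⟩

end Directions

theorem sum_pairsCount_richDirs_ge {p n : ℕ} [Fact p.Prime] {U : Finset (ZMod p × ZMod p)}
    (hθ₁ : (n : ℚ) - 1 < #U / p) (hθ₂ : (#U : ℚ) / p ≤ n) :
    (#U : ℚ) * (#U - 1) / 2
      - (#(specialDirs p U) - #(richDirs p U)) * ((n - 1) * #U / 2)
      - (p + 1 - #(specialDirs p U)) * ((n - 1) * (#U - p * n / 2))
    ≤ ∑ m ∈ richDirs p U, (pairsCount p U m : ℚ) := by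
  set R := richDirs p U
  set S := specialDirs p U
  have htotal : ∑ m, (pairsCount p U m : ℚ) = (#U : ℚ) * (#U - 1) / 2 := by
    rw [← Nat.cast_choose_two, ← sum_pairsCount, Nat.cast_sum]
  have hsplit : ∑ m ∈ S \ R, (pairsCount p U m : ℚ) + ∑ m ∈ R, (pairsCount p U m : ℚ)
      + ∑ m ∈ Sᶜ, (pairsCount p U m : ℚ) = ∑ m, (pairsCount p U m : ℚ) := by
    rw [sum_sdiff richDirs_subset_specialDirs, sum_add_sum_compl]
  have hspecial : ∑ m ∈ S \ R, (pairsCount p U m : ℚ) ≤ #(S \ R) • ((n - 1) * #U / 2) :=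
    sum_le_card_nsmul _ _ _ fun m hm => pairsCount_le_of_not_isRichDir hθ₂
      fun h => (mem_sdiff.mp hm).2 (mem_filter.mpr ⟨mem_univ m, h⟩)
  have hnonspecial : ∑ m ∈ Sᶜ, (pairsCount p U m : ℚ) ≤ #Sᶜ • ((n - 1) * (#U - p * n / 2)) :=
    sum_le_card_nsmul _ _ _ fun m hm => pairsCount_le_of_not_isSpecialDir hθ₁ hθ₂
      fun h => mem_compl.mp hm (mem_filter.mpr ⟨mem_univ m, h⟩)
  rw [card_sdiff_of_subset richDirs_subset_specialDirs, nsmul_eq_mul,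
    Nat.cast_sub (card_le_card richDirs_subset_specialDirs)] at hspecial
  rw [card_compl, Fintype.card_option, ZMod.card, nsmul_eq_mul,
    Nat.cast_sub (card_le_univ S |>.trans_eq (by rw [Fintype.card_option, ZMod.card])),
    Nat.cast_add_one] at hnonspecial
  linarith

theorem sum_cm_lower_bound_general (p n r : ℕ) [Fact p.Prime]
    (U : Finset (ZMod p × ZMod p))
    (hn : 1 ≤ n) (hr : r + n < p)
    (hcard : (U.card : ℤ) = n * p - r)
    (hD : (({m : Option (ZMod p) | IsSpecialDir p U m}.ncard : ℚ))
        ≤ 1 + ((p : ℚ) - r) / (n + 1)) :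
    ((p : ℚ) - n) * U.card / 2
      - (1 - 1 / ((n : ℚ) + 1)) * r * ((p : ℚ) - r)
      + ((n : ℚ) - 1) * U.card * ((richDirs p U).card : ℚ) / 2
    ≤ ∑ m ∈ richDirs p U, (pairsCount p U m : ℚ) := by
  have hp : (0 : ℚ) < p := by exact_mod_cast (Fact.out : p.Prime).pos
  have hN : (#U : ℚ) = n * p - r := by exact_mod_cast hcard
  have hrp : (r : ℚ) < p := by exact_mod_cast (Nat.le_add_right r n).trans_lt hr
  have hn' : (1 : ℚ) ≤ n := by exact_mod_cast hn
  have hθ₁ : (n : ℚ) - 1 < #U / p := by rw [lt_div_iff₀ hp, hN]; linarith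
  have hθ₂ : (#U : ℚ) / p ≤ n := by rw [div_le_iff₀ hp, hN]; linarith [r.cast_nonneg (α := ℚ)]
  rw [ncard_setOf_isSpecialDir] at hD
  refine le_trans ?_ (sum_pairsCount_richDirs_ge hθ₁ hθ₂)
  -- the slack is `r (n - 1) / 2 * (1 + (p - r) / (n + 1) - #specialDirs)`
  have hslack := mul_le_mul_of_nonneg_left hD
    (by positivity : (0 : ℚ) ≤ r * (n - 1) / 2)
  have hq : ((p : ℚ) - r) / (n + 1) * (n + 1) = p - r := div_mul_cancel₀ _ (by positivity)
  rw [hN]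
  linear_combination hslack + (r / 2) * hq

theorem sum_cm_lower_bound (p n r : ℕ) [Fact p.Prime]
    (U : Finset (ZMod p × ZMod p))
    (hn : 1 ≤ n) (hnp : n < p) (hr : r + n < p)
    (hcard : (U.card : ℤ) = n * p - r)
    (hlines : ¬ ∃ L : Fin n → Option (ZMod p) × ZMod p,
      ∀ u ∈ U, ∃ i : Fin n, u ∈ lineWithSlope p (L i).1 (L i).2)
    (hD : (({m : Option (ZMod p) | IsSpecialDir p U m}.ncard : ℚ))
        ≤ 1 + ((p : ℚ) - r) / (n + 1)) :
    ((p : ℚ) - n) * U.card / 2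
      - (1 - 1 / ((n : ℚ) + 1)) * r * ((p : ℚ) - r)
      + ((n : ℚ) - 1) * U.card * ((richDirs p U).card : ℚ) / 2
    ≤ ∑ m ∈ richDirs p U, (pairsCount p U m : ℚ) :=
  sum_cm_lower_bound_general p n r U hn hr hcard hD
end

section
/- Let p be a prime and U ⊆ F_p^2 with #U = n·p - r, where 1 ≤ n ≤ p and 0 ≤ r < p. Suppose m_0 ∈ F_p ∪ {∞} is a direction such that every U-special direction equals m_0. Then every line with slope m_0 is either entirely contained in U or meets U in at most p - r points. -/
open Finset Polynomial

attribute [local instance] Classical.propDecidable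

/-! Take a point `Q` of the line that is not in `U`. The `p + 1` lines through `Q` partition the
plane minus `Q`, so `#U` is the sum of their intersections with `U`. None of the `p` lines through
`Q` with slope other than `m₀` is `U`-poor, and since `θ = n - r/p` with `r < p`, each of them meets
`U` in at least `n - 1` points. What is left for the line with slope `m₀` is at most
`(n p - r) - p (n - 1) = p - r`. -/

section Lines

variable {p : ℕ}

theorem mem_lineWithSlope_some [NeZero p] {a c : ZMod p} {P : ZMod p × ZMod p} :
    P ∈ lineWithSlope p (some a) c ↔ P.2 = a * P.1 + c := by
  simp [lineWithSlope]

theorem mem_lineWithSlope_none [NeZero p] {c : ZMod p} {P : ZMod p × ZMod p} :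
    P ∈ lineWithSlope p none c ↔ P.1 = c := by
  simp [lineWithSlope]

noncomputable def lineThrough (p : ℕ) [NeZero p] (Q : ZMod p × ZMod p) (m : Option (ZMod p)) :
    Finset (ZMod p × ZMod p) :=
  lineWithSlope p m (m.elim Q.1 fun a => Q.2 - a * Q.1)

theorem mem_lineThrough_some [NeZero p] {Q P : ZMod p × ZMod p} {a : ZMod p} :
    P ∈ lineThrough p Q (some a) ↔ P.2 - Q.2 = a * (P.1 - Q.1) := by
  rw [lineThrough, Option.elim, mem_lineWithSlope_some]
  constructor <;> intro h <;> linear_combination h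

theorem mem_lineThrough_none [NeZero p] {Q P : ZMod p × ZMod p} :
    P ∈ lineThrough p Q none ↔ P.1 = Q.1 :=
  mem_lineWithSlope_none

theorem lineWithSlope_eq_lineThrough [NeZero p] {Q : ZMod p × ZMod p} {m : Option (ZMod p)}
    {c : ZMod p} (hQ : Q ∈ lineWithSlope p m c) : lineWithSlope p m c = lineThrough p Q m := by
  cases m with
  | none => rw [lineThrough, Option.elim, ← mem_lineWithSlope_none.mp hQ]
  | some a =>
    have hc : c = Q.2 - a * Q.1 := by rw [mem_lineWithSlope_some.mp hQ]; ring
    rw [lineThrough, Option.elim, ← hc]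

variable [Fact p.Prime]

theorem eq_of_mem_lineThrough_of_ne {Q P : ZMod p × ZMod p} {m m' : Option (ZMod p)}
    (hne : m ≠ m') (hP : P ∈ lineThrough p Q m) (hP' : P ∈ lineThrough p Q m') : P = Q := by
  match m, m' with
  | none, none => exact absurd rfl hne
  | none, some a | some a, none =>
    simp only [mem_lineThrough_none, mem_lineThrough_some] at hP hP'
    grind
  | some a, some b =>
    rw [mem_lineThrough_some] at hP hP'
    have hab : a - b ≠ 0 := sub_ne_zero.mpr fun h => hne (congrArg some h)
    have h1 : P.1 = Q.1 := by
      have : (a - b) * (P.1 - Q.1) = 0 := by linear_combination hP' - hP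
      exact sub_eq_zero.mp ((mul_eq_zero.mp this).resolve_left hab)
    refine Prod.ext h1 (sub_eq_zero.mp ?_)
    rw [hP, h1, sub_self, mul_zero]

theorem exists_mem_lineThrough (Q P : ZMod p × ZMod p) : ∃ m, P ∈ lineThrough p Q m := by
  by_cases h : P.1 = Q.1
  · exact ⟨none, mem_lineThrough_none.mpr h⟩
  · refine ⟨some ((P.2 - Q.2) / (P.1 - Q.1)), mem_lineThrough_some.mpr ?_⟩
    rw [div_mul_cancel₀ _ (sub_ne_zero.mpr h)]

theorem card_eq_sum_card_lineThrough_inter {U : Finset (ZMod p × ZMod p)}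
    {Q : ZMod p × ZMod p} (hQ : Q ∉ U) :
    #U = ∑ m : Option (ZMod p), #(lineThrough p Q m ∩ U) := by
  have hU : U = univ.biUnion fun m => lineThrough p Q m ∩ U := by
    ext P
    simp only [mem_biUnion, mem_univ, true_and, mem_inter]
    exact ⟨fun h => (exists_mem_lineThrough Q P).imp fun _ hm => ⟨hm, h⟩, fun ⟨_, _, h⟩ => h⟩
  conv_lhs => rw [hU]
  refine card_biUnion fun m _ m' _ hne => disjoint_left.mpr fun P hP hP' => ?_
  rw [mem_inter] at hP hP'
  exact hQ (eq_of_mem_lineThrough_of_ne hne hP.1 hP'.1 ▸ hP.2)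

end Lines

theorem le_card_inter_of_not_isPoor {p n r : ℕ} {U ℓ : Finset (ZMod p × ZMod p)}
    (hr : r < p) (hcard : (#U : ℤ) = n * p - r) (hℓ : ¬IsPoor p U ℓ) :
    (n : ℤ) - 1 ≤ #(ℓ ∩ U) := by
  by_contra! hlt
  apply hℓ
  have hp : (0 : ℚ) < p := by exact_mod_cast (Nat.zero_le r).trans_lt hr
  have hcardq : (#U : ℚ) = n * p - r := by exact_mod_cast hcard
  have hrq : (r : ℚ) + 1 ≤ p := by exact_mod_cast hr
  have hlt' : (#(ℓ ∩ U) : ℚ) ≤ n - 2 := by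
    have : (#(ℓ ∩ U) : ℤ) ≤ n - 2 := by omega
    exact_mod_cast this
  rw [IsPoor, le_sub_iff_add_le, le_div_iff₀ hp]
  nlinarith

theorem line_with_unique_special_slope_general (p n r : ℕ) [Fact p.Prime]
    (U : Finset (ZMod p × ZMod p))
    (hr : r < p)
    (hcard : (U.card : ℤ) = n * p - r)
    (m0 : Option (ZMod p))
    (hm0 : ∀ m : Option (ZMod p), IsSpecialDir p U m → m = m0) :
    ∀ c : ZMod p, lineWithSlope p m0 c ⊆ U
      ∨ ((lineWithSlope p m0 c ∩ U).card : ℤ) ≤ (p : ℤ) - r := by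
  intro c
  refine or_iff_not_imp_left.mpr fun hsub => ?_
  obtain ⟨Q, hQℓ, hQU⟩ := not_subset.mp hsub
  rw [lineWithSlope_eq_lineThrough hQℓ]
  have hsplit : (#U : ℤ) = #(lineThrough p Q m0 ∩ U)
      + ∑ m ∈ univ.erase m0, (#(lineThrough p Q m ∩ U) : ℤ) := by
    rw [card_eq_sum_card_lineThrough_inter hQU, ← add_sum_erase _ _ (mem_univ m0)]
    push_cast; rfl
  have hothers : #(univ.erase m0) • ((n : ℤ) - 1)
      ≤ ∑ m ∈ univ.erase m0, (#(lineThrough p Q m ∩ U) : ℤ) :=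
    card_nsmul_le_sum _ _ _ fun m hm => le_card_inter_of_not_isPoor hr hcard
      fun hpoor => ne_of_mem_erase hm (hm0 m ⟨_, Or.inr hpoor⟩)
  rw [card_erase_of_mem (mem_univ m0), card_univ, Fintype.card_option, ZMod.card,
    Nat.add_sub_cancel, nsmul_eq_mul] at hothers
  linarith

theorem line_with_unique_special_slope (p n r : ℕ) [Fact p.Prime]
    (U : Finset (ZMod p × ZMod p))
    (hn : 1 ≤ n) (hnp : n ≤ p) (hr : r < p)
    (hcard : (U.card : ℤ) = n * p - r)
    (m0 : Option (ZMod p))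
    (hm0 : ∀ m : Option (ZMod p), IsSpecialDir p U m → m = m0) :
    ∀ c : ZMod p, lineWithSlope p m0 c ⊆ U
      ∨ ((lineWithSlope p m0 c ∩ U).card : ℤ) ≤ (p : ℤ) - r :=
  line_with_unique_special_slope_general p n r U hr hcard m0 hm0
end

section
/- Let p be a prime and U ⊆ F_p^2 with #U = n·p - r, where 1 ≤ n < p, 0 ≤ r < p, and p - r ≤ n. If U is not contained in the union of n lines of F_p^2, then there exist at least two distinct U-special directions. -/
open Finset Polynomial

attribute [local instance] Classical.propDecidable

/-!
Suppose every direction other than `m₀` is non-special. Since `#U / p = n - r / p`, every line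
in such a direction carries `n - 1` or `n` points of `U`, and exactly `r` lines of each such
direction carry `n - 1`. Counting `U` along the `p + 1` lines through a point `q ∈ U` shows that
the line of slope `m₀` through `q` carries `p - r` points plus the number of deficient lines
through `q`; summing over `q` gives the second moment `∑ T_c²` of the counts `T_c` of the lines
of slope `m₀`. Every line of slope `m₀` meeting `U` has `p - r ≤ T_c ≤ p`, and
`∑ (T_c - (p - r)) (p - T_c) ≥ 0` over these lines bounds their number by `n`, so `n` lines
cover `U`.
-/

def intercept {p : ℕ} (m : Option (ZMod p)) (q : ZMod p × ZMod p) : ZMod p :=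
  match m with
  | some m => q.2 - m * q.1
  | none => q.1

def joiningSlope {p : ℕ} [Fact p.Prime] (u q : ZMod p × ZMod p) : Option (ZMod p) :=
  if u.1 = q.1 then none else some ((u.2 - q.2) / (u.1 - q.1))

noncomputable def lineCount (p : ℕ) [NeZero p] (U : Finset (ZMod p × ZMod p))
    (m : Option (ZMod p)) (c : ZMod p) : ℕ :=
  #(lineWithSlope p m c ∩ U)

lemma mem_lineWithSlope_iff {p : ℕ} [NeZero p] {m : Option (ZMod p)} {c : ZMod p}
    {q : ZMod p × ZMod p} : q ∈ lineWithSlope p m c ↔ intercept m q = c := by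
  cases m with
  | none => simp [lineWithSlope, intercept]
  | some m => simp [lineWithSlope, intercept, sub_eq_iff_eq_add']

lemma card_lineWithSlope {p : ℕ} [NeZero p] (m : Option (ZMod p)) (c : ZMod p) :
    #(lineWithSlope p m c) = p := by
  cases m <;> simp only [lineWithSlope, card_filter, Fintype.sum_prod_type] <;>
    simp [apply_ite card]

lemma intercept_eq_intercept_iff {p : ℕ} [Fact p.Prime] {u q : ZMod p × ZMod p} (h : u ≠ q)
    {m : Option (ZMod p)} : intercept m u = intercept m q ↔ m = joiningSlope u q := by
  by_cases h₁ : u.1 = q.1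
  · have h₂ : u.2 - q.2 ≠ 0 := sub_ne_zero.2 fun h₂ => h (Prod.ext h₁ h₂)
    cases m with
    | none => simp [intercept, joiningSlope, h₁]
    | some m =>
      simp only [intercept, joiningSlope, h₁, if_true, reduceCtorEq, iff_false]
      exact fun h' => h₂ (by linear_combination h')
  · have hd : u.1 - q.1 ≠ 0 := sub_ne_zero.2 h₁
    cases m with
    | none => simp [intercept, joiningSlope, h₁]
    | some m =>
      simp only [intercept, joiningSlope, h₁, if_false, Option.some.injEq, eq_div_iff hd]
      constructor <;> intro h' <;> linear_combination -h'

section LineCounts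

variable {p : ℕ} [Fact p.Prime] (U : Finset (ZMod p × ZMod p))

lemma inter_lineWithSlope_eq_filter (m : Option (ZMod p)) (c : ZMod p) :
    lineWithSlope p m c ∩ U = U.filter (intercept m · = c) := by
  ext q; simp [mem_lineWithSlope_iff, and_comm]

lemma lineCount_le (m : Option (ZMod p)) (c : ZMod p) : lineCount p U m c ≤ p :=
  (card_le_card inter_subset_left).trans_eq (card_lineWithSlope m c)

lemma sum_lineCount_mul (m : Option (ZMod p)) (f : ZMod p → ℤ) :
    ∑ c, (lineCount p U m c : ℤ) * f c = ∑ q ∈ U, f (intercept m q) := by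
  rw [← sum_fiberwise_of_maps_to (g := intercept m) (fun q _ => mem_univ _)]
  refine sum_congr rfl fun c _ => ?_
  rw [lineCount, inter_lineWithSlope_eq_filter,
    sum_congr rfl fun q hq => congrArg f (mem_filter.1 hq).2, sum_const, nsmul_eq_mul]

lemma sum_lineCount (m : Option (ZMod p)) : ∑ c, (lineCount p U m c : ℤ) = #U := by
  simpa using sum_lineCount_mul U m 1

lemma sum_sub_lineCount {n r : ℕ} (hcard : (#U : ℤ) = n * p - r) (m : Option (ZMod p)) :
    ∑ c, ((n : ℤ) - lineCount p U m c) = r := by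
  rw [sum_sub_distrib, sum_lineCount, hcard, sum_const, card_univ, ZMod.card, nsmul_eq_mul]
  ring

/-- The `p + 1` lines through `q ∈ U` cover `U`, meeting only at `q`. -/
lemma sum_lineCount_intercept {q : ZMod p × ZMod p} (hq : q ∈ U) :
    ∑ m, lineCount p U m (intercept m q) = #U + p := by
  simp only [lineCount, inter_lineWithSlope_eq_filter, card_filter]
  have hone : ∀ u ∈ U.erase q, ∑ m, (if intercept m u = intercept m q then 1 else 0) = 1 :=
    fun u hu => by
      rw [← card_filter, filter_congr fun m _ => intercept_eq_intercept_iff (ne_of_mem_erase hu),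
        filter_eq', if_pos (mem_univ _), card_singleton]
  rw [sum_comm, ← add_sum_erase U _ hq, sum_congr rfl hone]
  simp only [↓reduceIte, sum_const, card_univ, Fintype.card_option, ZMod.card, smul_eq_mul,
    mul_one, card_erase_of_mem hq]
  have := card_pos.2 ⟨q, hq⟩
  omega

lemma lineCount_mem_Icc_of_not_isSpecialDir {n r : ℕ} {m : Option (ZMod p)}
    (hm : ¬ IsSpecialDir p U m) (hr : r < p) (hcard : (#U : ℤ) = n * p - r) (c : ZMod p) :
    (n : ℤ) - 1 ≤ lineCount p U m c ∧ (lineCount p U m c : ℤ) ≤ n := by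
  simp only [IsSpecialDir, IsRich, IsPoor, not_exists, not_or, not_le] at hm
  obtain ⟨hrich, hpoor⟩ : (lineCount p U m c : ℚ) < (#U : ℚ) / p + 1 ∧
      (#U : ℚ) / p - 1 < lineCount p U m c := hm c
  have hp : (0 : ℚ) < p := by exact_mod_cast (Fact.out : p.Prime).pos
  have hθ : (#U : ℚ) / p = n - r / p := by
    rw [show (#U : ℚ) = n * p - r by exact_mod_cast hcard]
    field_simp
  have hrp : (r : ℚ) / p < 1 := (div_lt_one hp).2 (by exact_mod_cast hr)
  have hr₀ : (0 : ℚ) ≤ r / p := by positivity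
  have hlo : (n : ℤ) - 2 < lineCount p U m c := by
    have : (n : ℚ) - 2 < lineCount p U m c := by linarith
    exact_mod_cast this
  have hhi : (lineCount p U m c : ℤ) < n + 1 := by
    have : (lineCount p U m c : ℚ) < n + 1 := by linarith
    exact_mod_cast this
  omega

/-- The weight `n - lineCount` is `1` on the `r` lines with `n - 1` points and `0` on the rest. -/
lemma sum_lineCount_mul_sub_lineCount {n r : ℕ} {m : Option (ZMod p)}
    (hm : ¬ IsSpecialDir p U m) (hr : r < p) (hcard : (#U : ℤ) = n * p - r) :
    ∑ c, (lineCount p U m c : ℤ) * (n - lineCount p U m c) = (n - 1) * r := by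
  rw [← sum_sub_lineCount U hcard m, mul_sum]
  refine sum_congr rfl fun c _ => ?_
  obtain ⟨hlo, hhi⟩ := lineCount_mem_Icc_of_not_isSpecialDir U hm hr hcard c
  have h : (lineCount p U m c : ℤ) = n - 1 ∨ (lineCount p U m c : ℤ) = n := by omega
  rcases h with h | h <;> simp only [h]; ring

end LineCounts

lemma card_mul_le_of_forall_mem_Icc {ι R : Type*} [CommRing R] [LinearOrder R]
    [IsStrictOrderedRing R] {s : Finset ι} {f : ι → R} {a b : R}
    (h : ∀ i ∈ s, a ≤ f i ∧ f i ≤ b) :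
    #s * (a * b) ≤ (a + b) * ∑ i ∈ s, f i - ∑ i ∈ s, f i ^ 2 := by
  have hnonneg : 0 ≤ ∑ i ∈ s, (f i - a) * (b - f i) :=
    sum_nonneg fun i hi => mul_nonneg (sub_nonneg.2 (h i hi).1) (sub_nonneg.2 (h i hi).2)
  have hexpand : ∑ i ∈ s, (f i - a) * (b - f i)
      = (a + b) * ∑ i ∈ s, f i - ∑ i ∈ s, f i ^ 2 - #s * (a * b) := by
    rw [mul_sum, ← sum_sub_distrib, ← nsmul_eq_mul, ← sum_const, ← sum_sub_distrib]
    exact sum_congr rfl fun i _ => by ring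
  linarith

lemma exists_cover_of_forall_intercept_mem {p n : ℕ} [NeZero p] {U : Finset (ZMod p × ZMod p)}
    {m : Option (ZMod p)} {S : Finset (ZMod p)} (hU : ∀ u ∈ U, intercept m u ∈ S)
    (hS : #S ≤ n) :
    ∃ L : Fin n → Option (ZMod p) × ZMod p,
      ∀ u ∈ U, ∃ i : Fin n, u ∈ lineWithSlope p (L i).1 (L i).2 := by
  refine ⟨fun i => (m, if hi : (i : ℕ) < #S then S.equivFin.symm ⟨i, hi⟩ else 0),
    fun u hu => ⟨Fin.castLE hS (S.equivFin ⟨_, hU u hu⟩), ?_⟩⟩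
  simp [mem_lineWithSlope_iff]

section OneSpecialDirection

variable {p n r : ℕ} [Fact p.Prime] {U : Finset (ZMod p × ZMod p)} {m₀ : Option (ZMod p)}

lemma lineCount_intercept_eq (hcard : (#U : ℤ) = n * p - r) {q : ZMod p × ZMod p}
    (hq : q ∈ U) :
    (lineCount p U m₀ (intercept m₀ q) : ℤ)
      = p - r + ∑ m ∈ univ.erase m₀, ((n : ℤ) - lineCount p U m (intercept m q)) := by
  have h := congrArg (Nat.cast : ℕ → ℤ) (sum_lineCount_intercept U hq)
  push_cast at h
  rw [← add_sum_erase _ _ (mem_univ m₀), hcard] at h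
  rw [sum_sub_distrib, sum_const, card_erase_of_mem (mem_univ _)]
  simp only [card_univ, Fintype.card_option, ZMod.card, add_tsub_cancel_right, nsmul_eq_mul]
  linarith

variable (hr : r < p) (hcard : (#U : ℤ) = n * p - r)
  (hm₀ : ∀ m ≠ m₀, ¬ IsSpecialDir p U m)
include hr hcard hm₀

lemma sub_le_lineCount_intercept {q : ZMod p × ZMod p} (hq : q ∈ U) :
    (p : ℤ) - r ≤ lineCount p U m₀ (intercept m₀ q) := by
  rw [lineCount_intercept_eq hcard hq, le_add_iff_nonneg_right]
  exact sum_nonneg fun m hm => sub_nonneg.2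
    (lineCount_mem_Icc_of_not_isSpecialDir U (hm₀ m (ne_of_mem_erase hm)) hr hcard _).2

lemma sum_lineCount_sq :
    ∑ c, (lineCount p U m₀ c : ℤ) ^ 2 = (n * p - r) * (p - r) + p * ((n - 1) * r) := by
  have hdeficiency : ∀ m ∈ univ.erase m₀,
      ∑ q ∈ U, ((n : ℤ) - lineCount p U m (intercept m q)) = (n - 1) * r := fun m hm => by
    rw [← sum_lineCount_mul U m (fun c => (n : ℤ) - lineCount p U m c)]
    exact sum_lineCount_mul_sub_lineCount U (hm₀ m (ne_of_mem_erase hm)) hr hcard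
  simp only [sq]
  rw [sum_lineCount_mul U m₀, sum_congr rfl fun q hq => lineCount_intercept_eq hcard hq,
    sum_add_distrib, sum_comm, sum_congr rfl hdeficiency, sum_const, sum_const,
    card_erase_of_mem (mem_univ _), ← hcard]
  simp [ZMod.card]

lemma card_image_intercept_le : #(U.image (intercept m₀)) ≤ n := by
  set S := U.image (intercept m₀)
  have hzero : ∀ c ∉ S, (lineCount p U m₀ c : ℤ) = 0 := fun c hc => by
    simp only [lineCount, inter_lineWithSlope_eq_filter, Nat.cast_eq_zero, card_eq_zero,
      filter_eq_empty_iff]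
    exact fun q hq hqc => hc (mem_image.2 ⟨q, hq, hqc⟩)
  have hsum : ∑ c ∈ S, (lineCount p U m₀ c : ℤ) = #U := by
    rw [← sum_lineCount U m₀]
    exact sum_subset (subset_univ S) fun c _ hc => hzero c hc
  have hsq : ∑ c ∈ S, (lineCount p U m₀ c : ℤ) ^ 2
      = (n * p - r) * (p - r) + p * ((n - 1) * r) := by
    rw [← sum_lineCount_sq hr hcard hm₀]
    exact sum_subset (subset_univ S) fun c _ hc => by rw [hzero c hc, sq, mul_zero]
  have hbound := card_mul_le_of_forall_mem_Icc (f := (lineCount p U m₀ · : _ → ℤ))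
    (a := p - r) (b := p) fun c hc => by
      obtain ⟨q, hq, rfl⟩ := mem_image.1 hc
      exact ⟨sub_le_lineCount_intercept hr hcard hm₀ hq, by exact_mod_cast lineCount_le U _ _⟩
  rw [hsum, hsq, hcard] at hbound
  have hpr : (0 : ℤ) < (p - r) * p := mul_pos (by omega) (by omega)
  have : (#S : ℤ) * ((p - r) * p) ≤ n * ((p - r) * p) := by linarith
  exact_mod_cast le_of_mul_le_mul_right this hpr

end OneSpecialDirection

theorem two_special_directions_general (p n r : ℕ) [Fact p.Prime]
    (U : Finset (ZMod p × ZMod p))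
    (hr : r < p)
    (hcard : (U.card : ℤ) = n * p - r)
    (hlines : ¬ ∃ L : Fin n → Option (ZMod p) × ZMod p,
      ∀ u ∈ U, ∃ i : Fin n, u ∈ lineWithSlope p (L i).1 (L i).2) :
    ∃ m₁ m₂ : Option (ZMod p), m₁ ≠ m₂
      ∧ IsSpecialDir p U m₁ ∧ IsSpecialDir p U m₂ := by
  by_contra hcon
  obtain ⟨m₀, hm₀⟩ : ∃ m₀ : Option (ZMod p), ∀ m ≠ m₀, ¬ IsSpecialDir p U m := by
    by_cases h : ∃ m, IsSpecialDir p U m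
    · obtain ⟨m₀, h₀⟩ := h
      exact ⟨m₀, fun m hm hs => hcon ⟨m, m₀, hm, hs, h₀⟩⟩
    · exact ⟨none, fun m _ hs => h ⟨m, hs⟩⟩
  exact hlines (exists_cover_of_forall_intercept_mem (fun u hu => mem_image_of_mem _ hu)
    (card_image_intercept_le hr hcard hm₀))

theorem two_special_directions (p n r : ℕ) [Fact p.Prime]
    (U : Finset (ZMod p × ZMod p))
    (hn : 1 ≤ n) (hnp : n < p) (hr : r < p)
    (hpr : (p : ℤ) - r ≤ (n : ℤ))
    (hcard : (U.card : ℤ) = n * p - r)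
    (hlines : ¬ ∃ L : Fin n → Option (ZMod p) × ZMod p,
      ∀ u ∈ U, ∃ i : Fin n, u ∈ lineWithSlope p (L i).1 (L i).2) :
    ∃ m₁ m₂ : Option (ZMod p), m₁ ≠ m₂
      ∧ IsSpecialDir p U m₁ ∧ IsSpecialDir p U m₂ :=
  two_special_directions_general p n r U hr hcard hlines
end
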